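/- arXiv:1110.3817 — 6 statements merged into one kernel-verified Lean document; each statement's English description precedes it below -/
import Mathlib

section
/- For every integer n ≥ 1 and every real number α, the sum over all set partitions P of {1,…,n} of α^{#P} · ∏_{b ∈ P} (#b − 1)! equals the rising factorial α^{↑n} = α(α+1)⋯(α+n−1). (Equivalently, the Ewens(α) weights α^{#P} ∏_{b∈P} Γ(#b) on set partitions of [n] have total mass α^{↑n}.) -/
/-!
Fix an element `a` of `s` with `#s = m + 1` and sort the partitions by the block `insert a t`
containing `a`. Deleting that block leaves an arbitrary partition of `s \ insert a t`, and the
block contributes the factor `x · (#t)!`, so by induction the total weight is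
`x · ∑_{t ⊆ s \ {a}} (#t)! · x^{↑(m - #t)}`. Grouping by `k = #t` this is
`x · ∑_k m(m-1)⋯(m-k+1) · x^{↑(m-k)} = x · (x+1)^{↑m} = x^{↑(m+1)}`.
-/

/-- The rising factorial `x^{↑n} = x(x+1)⋯(x+n−1)`. -/
def risingFactorial (x : ℝ) (n : ℕ) : ℝ := ∏ i ∈ Finset.range n, (x + i)

open Finset Nat

lemma risingFactorial_succ (x : ℝ) (n : ℕ) :
    risingFactorial x (n + 1) = risingFactorial x n * (x + n) :=
  prod_range_succ _ n

lemma risingFactorial_succ' (x : ℝ) (n : ℕ) :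
    risingFactorial x (n + 1) = x * risingFactorial (x + 1) n := by
  rw [risingFactorial, prod_range_succ', risingFactorial, mul_comm]
  push_cast
  simp_rw [add_zero, add_assoc, add_comm (1 : ℝ)]

lemma sum_descFactorial_mul_risingFactorial (x : ℝ) (m : ℕ) :
    ∑ k ∈ range (m + 1), (m.descFactorial k : ℝ) * risingFactorial x (m - k) =
      risingFactorial (x + 1) m := by
  induction m with
  | zero => simp [risingFactorial]
  | succ m ih =>
    simp_rw [sum_range_succ' _ (m + 1), succ_descFactorial_succ, Nat.add_sub_add_right,
      push_cast, mul_assoc, ← mul_sum, ih]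
    rw [descFactorial_zero, Nat.sub_zero, risingFactorial_succ', risingFactorial_succ]
    push_cast
    ring

lemma sum_powerset_factorial_mul_risingFactorial {β : Type*} (x : ℝ) (u : Finset β) :
    ∑ t ∈ u.powerset, ((#t)! : ℝ) * risingFactorial x (#u - #t) = risingFactorial (x + 1) #u := by
  rw [sum_powerset_apply_card (fun k => (k ! : ℝ) * risingFactorial x (#u - k)),
    ← sum_descFactorial_mul_risingFactorial]
  refine sum_congr rfl fun k _ => ?_
  rw [nsmul_eq_mul, ← mul_assoc, descFactorial_eq_factorial_mul_choose]
  push_cast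
  ring

namespace Finpartition

variable {α : Type*} [DecidableEq α] {s b : Finset α}

lemma parts_avoid_of_mem (P : Finpartition s) (hb : b ∈ P.parts) :
    (P.avoid b).parts = P.parts.erase b := by
  ext c
  simp only [mem_avoid, mem_erase]
  constructor
  · rintro ⟨d, hd, hdb, rfl⟩
    have hne : d ≠ b := by rintro rfl; exact hdb le_rfl
    have hdisj : Disjoint d b := P.disjoint hd hb hne
    rw [Finset.sdiff_eq_self_of_disjoint hdisj]
    exact ⟨hne, hd⟩
  · rintro ⟨hne, hc⟩
    have hdisj : Disjoint c b := P.disjoint hc hb hne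
    refine ⟨c, hc, fun hcb => P.ne_bot hc ?_, Finset.sdiff_eq_self_of_disjoint hdisj⟩
    exact disjoint_self.1 (hdisj.mono_right hcb)

lemma notMem_parts_of_sdiff (Q : Finpartition (s \ b)) (hb : b.Nonempty) : b ∉ Q.parts :=
  fun h => hb.ne_empty (disjoint_self.1 (disjoint_sdiff_self_left.mono_left (Q.le h)))

def memPartsEquiv (hbs : b ⊆ s) (hb : b.Nonempty) :
    {P : Finpartition s // b ∈ P.parts} ≃ Finpartition (s \ b) where
  toFun P := P.1.avoid b
  invFun Q := ⟨Q.extend hb.ne_empty sdiff_disjoint (sdiff_sup_cancel hbs), by simp⟩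
  left_inv P := Subtype.ext <| Finpartition.ext <| by
    simp [parts_avoid_of_mem _ P.2, insert_erase P.2]
  right_inv Q := Finpartition.ext <| by
    rw [parts_avoid_of_mem _ (by simp), extend_parts, erase_insert (Q.notMem_parts_of_sdiff hb)]

lemma parts_memPartsEquiv_symm (hbs : b ⊆ s) (hb : b.Nonempty) (Q : Finpartition (s \ b)) :
    ((memPartsEquiv hbs hb).symm Q).1.parts = insert b Q.parts :=
  rfl

end Finpartition

open Finpartition

variable {α : Type*} [DecidableEq α]

noncomputable def ewensWeight {s : Finset α} (x : ℝ) (P : Finpartition s) : ℝ :=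
  x ^ #P.parts * ∏ b ∈ P.parts, ((#b - 1)! : ℝ)

lemma sum_ewensWeight_of_mem_parts {s b : Finset α} (x : ℝ) (hbs : b ⊆ s) (hb : b.Nonempty) :
    ∑ P : Finpartition s with b ∈ P.parts, ewensWeight x P =
      x * (#b - 1)! * ∑ Q : Finpartition (s \ b), ewensWeight x Q := by
  rw [sum_subtype (p := fun P : Finpartition s => b ∈ P.parts) _ (by simp),
    ← (memPartsEquiv hbs hb).symm.sum_comp, mul_sum]
  refine sum_congr rfl fun Q _ => ?_
  have hQ := Q.notMem_parts_of_sdiff hb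
  rw [ewensWeight, ewensWeight, parts_memPartsEquiv_symm, card_insert_of_notMem hQ,
    prod_insert hQ]
  ring

theorem sum_ewensWeight (x : ℝ) (s : Finset α) :
    ∑ P : Finpartition s, ewensWeight x P = risingFactorial x #s := by
  induction s using strongInduction with
  | H s ih =>
  obtain rfl | ⟨a, ha⟩ := s.eq_empty_or_nonempty
  · -- the `Unique` instance is stated for `⊥`, which is not reducibly `∅`
    have : Unique (Finpartition (∅ : Finset α)) :=
      inferInstanceAs (Unique (Finpartition (⊥ : Finset α)))
    have hparts : (default : Finpartition (∅ : Finset α)).parts = ∅ :=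
      parts_eq_empty_iff.2 rfl
    simp [ewensWeight, risingFactorial, hparts]
  have hblock (P : Finpartition s) {t : Finset α} (hat : a ∉ t) :
      (P.part a).erase a = t ↔ insert a t ∈ P.parts := by
    constructor
    · rintro rfl
      rw [insert_erase (P.mem_part_self.2 ha)]
      exact P.part_mem.2 ha
    · intro ht
      rw [P.part_eq_of_mem ht (mem_insert_self a t), erase_insert hat]
  have hfiber : ∀ t ∈ (s.erase a).powerset,
      ∑ P : Finpartition s with (P.part a).erase a = t, ewensWeight x P =
        x * ((#t)! * risingFactorial x (#(s.erase a) - #t)) := by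
    intro t ht
    have hts : t ⊆ s.erase a := mem_powerset.1 ht
    have hat : a ∉ t := fun h => (mem_erase.1 (hts h)).1 rfl
    have hbs : insert a t ⊆ s := insert_subset ha (hts.trans (erase_subset a s))
    rw [filter_congr fun P _ => hblock P hat,
      sum_ewensWeight_of_mem_parts x hbs (insert_nonempty a t),
      ih _ (sdiff_ssubset hbs (insert_nonempty a t)), card_sdiff_of_subset hbs,
      card_insert_of_notMem hat, card_erase_of_mem ha, Nat.add_sub_cancel, mul_assoc,
      Nat.sub_sub, add_comm 1]
  calc ∑ P, ewensWeight x P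
      = ∑ t ∈ (s.erase a).powerset, ∑ P : Finpartition s with (P.part a).erase a = t,
          ewensWeight x P :=
        (sum_fiberwise_of_maps_to (fun P _ => mem_powerset.2 <|
          erase_subset_erase a (P.part_subset a)) _).symm
    _ = x * risingFactorial (x + 1) #(s.erase a) := by
      rw [sum_congr rfl hfiber, ← mul_sum, sum_powerset_factorial_mul_risingFactorial]
    _ = risingFactorial x #s := by
      rw [← risingFactorial_succ', card_erase_add_one ha]

theorem ewens_partition_normalization_general (n : ℕ) (α : ℝ) :
    ∑ P : Finpartition (Finset.univ : Finset (Fin n)),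
      α ^ P.parts.card * ∏ b ∈ P.parts, (Nat.factorial (b.card - 1) : ℝ) =
    risingFactorial α n := by
  simpa [ewensWeight] using sum_ewensWeight α (univ : Finset (Fin n))

/-- The Ewens(α) weights `α^{#P} ∏_{b∈P} (#b − 1)!` on set partitions of `[n]`
have total mass `α^{↑n}`. -/
theorem ewens_partition_normalization (n : ℕ) (hn : 1 ≤ n) (α : ℝ) :
    ∑ P : Finpartition (Finset.univ : Finset (Fin n)),
      α ^ P.parts.card * ∏ b ∈ P.parts, (Nat.factorial (b.card - 1) : ℝ) =
    risingFactorial α n :=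
  ewens_partition_normalization_general n α
end

section
/- For every integer n ≥ 1 and every real number α, the sum over all integer partitions of n, encoded as functions λ : {1,…,n} → ℕ with ∑_{j=1}^n j·λ_j = n, of the quantity n! · ∏_{j=1}^n α^{λ_j} / (j^{λ_j} · λ_j!) equals the rising factorial α^{↑n} = α(α+1)⋯(α+n−1). (Equivalently, the Ewens sampling formula p_n(λ;α) = (n!/α^{↑n}) ∏_j α^{λ_j}/(j^{λ_j} λ_j!) defines a probability distribution on integer partitions of n.) -/
open Finset

theorem factorial_mul_eq_risingFactorial {s : ℕ → ℝ} {α : ℝ} {N : ℕ} (h0 : s 0 = 1)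
    (hrec : ∀ m ≤ N, m * s m = α * ∑ k ∈ range m, s k) :
    ∀ m ≤ N, m.factorial * s m = risingFactorial α m := by
  intro m hm
  induction m with
  | zero => simp [h0, risingFactorial]
  | succ m ih =>
    have hstep : (m + 1 : ℝ) * s (m + 1) = (α + m) * s m := by
      have := hrec (m + 1) hm
      rw [sum_range_succ, mul_add, ← hrec m (by omega)] at this
      push_cast at this
      linarith
    calc ((m + 1).factorial : ℝ) * s (m + 1) = m.factorial * ((m + 1 : ℝ) * s (m + 1)) := by
          push_cast [Nat.factorial_succ]; ring
      _ = risingFactorial α m * (α + m) := by rw [hstep, ← ih (by omega)]; ring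
      _ = risingFactorial α (m + 1) := (prod_range_succ _ _).symm

namespace Ewens

variable {n m : ℕ}

-- `l j` is the multiplicity of the part size `j + 1`.
def size (l : Fin n → ℕ) : ℕ := ∑ j : Fin n, (j.1 + 1) * l j

def partitionMultiplicities (n m : ℕ) : Finset (Fin n → ℕ) :=
  (Fintype.piFinset fun _ : Fin n => range (m + 1)).filter (fun l => size l = m)

noncomputable def weight (α : ℝ) (l : Fin n → ℕ) : ℝ :=
  ∏ j : Fin n, α ^ l j / ((j.1 + 1 : ℝ) ^ l j * (l j).factorial)

noncomputable def mass (n : ℕ) (α : ℝ) (m : ℕ) : ℝ :=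
  ∑ l ∈ partitionMultiplicities n m, weight α l

lemma mul_apply_le_size (l : Fin n → ℕ) (j : Fin n) : (j.1 + 1) * l j ≤ size l :=
  single_le_sum (f := fun i : Fin n => (i.1 + 1) * l i) (fun _ _ => Nat.zero_le _) (mem_univ j)

lemma apply_eq_zero_of_size_lt {l : Fin n → ℕ} {j : Fin n} (h : size l < j.1 + 1) : l j = 0 := by
  by_contra hne
  have := mul_apply_le_size l j
  have : j.1 + 1 ≤ (j.1 + 1) * l j := Nat.le_mul_of_pos_right _ (Nat.pos_of_ne_zero hne)
  omega

lemma size_add_single (l : Fin n → ℕ) (j : Fin n) (k : ℕ) :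
    size (l + Pi.single j k) = size l + (j.1 + 1) * k := by
  simp [size, mul_add, sum_add_distrib, Pi.single_apply]

lemma mem_partitionMultiplicities {l : Fin n → ℕ} :
    l ∈ partitionMultiplicities n m ↔ size l = m := by
  simp only [partitionMultiplicities, mem_filter, Fintype.mem_piFinset, mem_range,
    and_iff_right_iff_imp]
  rintro rfl j
  nlinarith [mul_apply_le_size l j]

lemma mass_zero (n : ℕ) (α : ℝ) : mass n α 0 = 1 := by
  have : partitionMultiplicities n 0 = {0} := by
    ext l
    simp [mem_partitionMultiplicities, size, sum_eq_zero_iff, funext_iff]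
  simp [mass, this, weight]

lemma mul_weight_add_single (α : ℝ) (l : Fin n → ℕ) (j : Fin n) :
    ((j.1 + 1 : ℝ) * (l j + 1)) * weight α (l + Pi.single j 1) = α * weight α l := by
  set F : Fin n → ℕ → ℝ := fun i k => α ^ k / ((i.1 + 1 : ℝ) ^ k * k.factorial)
  change _ * ∏ i, F i ((l + Pi.single j 1 : Fin n → ℕ) i) = α * ∏ i, F i (l i)
  have hcompl : ∏ i ∈ {j}ᶜ, F i ((l + Pi.single j 1 : Fin n → ℕ) i) = ∏ i ∈ {j}ᶜ, F i (l i) :=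
    prod_congr rfl fun i hi => by
      rw [Pi.add_apply, Pi.single_eq_of_ne (by simpa using hi), add_zero]
  have hj : ((j.1 + 1 : ℝ) * (l j + 1)) * F j (l j + 1) = α * F j (l j) := by
    have : (j.1 + 1 : ℝ) ≠ 0 := by positivity
    simp only [F]
    push_cast [Nat.factorial_succ, pow_succ]
    field_simp
  rw [Fintype.prod_eq_mul_prod_compl j, Fintype.prod_eq_mul_prod_compl j, hcompl,
    Pi.add_apply, Pi.single_eq_same, ← mul_assoc, ← mul_assoc, hj]

lemma sub_single_add_single {l : Fin n → ℕ} {j : Fin n} (hl : l j ≠ 0) :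
    l - Pi.single j 1 + Pi.single j 1 = l := by
  funext i
  rcases eq_or_ne i j with rfl | hi
  · simp only [Pi.add_apply, Pi.sub_apply, Pi.single_eq_same]
    omega
  · simp [Pi.single_eq_of_ne hi]

lemma sum_mul_apply_mul_weight (α : ℝ) (j : Fin n) (hj : j.1 + 1 ≤ m) :
    ∑ l ∈ partitionMultiplicities n m, ((j.1 + 1 : ℝ) * l j) * weight α l =
      α * mass n α (m - (j.1 + 1)) := by
  rw [mass, mul_sum, ← sum_filter_of_ne (p := fun l => l j ≠ 0) fun l _ h hl => h (by simp [hl])]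
  symm
  refine sum_nbij' (· + Pi.single j 1) (· - Pi.single j 1) ?_ ?_ ?_ ?_ ?_
  · intro μ hμ
    rw [mem_partitionMultiplicities] at hμ
    rw [mem_filter, mem_partitionMultiplicities, size_add_single, hμ]
    exact ⟨by omega, by simp⟩
  · intro l hl
    rw [mem_filter, mem_partitionMultiplicities] at hl
    rw [mem_partitionMultiplicities]
    have := size_add_single (l - Pi.single j 1) j 1
    rw [sub_single_add_single hl.2] at this
    omega
  · intro μ _
    exact add_tsub_cancel_right μ _
  · intro l hl
    exact sub_single_add_single (mem_filter.mp hl).2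
  · intro μ _
    rw [← mul_weight_add_single α μ j]
    simp

lemma mul_mass (α : ℝ) (hm : m ≤ n) : m * mass n α m = α * ∑ k ∈ range m, mass n α k := by
  have hsplit : (m : ℝ) * mass n α m =
      ∑ j : Fin n, ∑ l ∈ partitionMultiplicities n m, ((j.1 + 1 : ℝ) * l j) * weight α l := by
    rw [mass, mul_sum, sum_comm]
    refine sum_congr rfl fun l hl => ?_
    rw [← sum_mul, ← mem_partitionMultiplicities.mp hl, size]
    push_cast
    rfl
  have hterm (j : Fin n) :
      ∑ l ∈ partitionMultiplicities n m, ((j.1 + 1 : ℝ) * l j) * weight α l =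
        if j.1 + 1 ≤ m then α * mass n α (m - (j.1 + 1)) else 0 := by
    split_ifs with hj
    · exact sum_mul_apply_mul_weight α j hj
    · refine sum_eq_zero fun l hl => ?_
      have hlt : size l < j.1 + 1 := by rw [mem_partitionMultiplicities.mp hl]; omega
      rw [apply_eq_zero_of_size_lt hlt]
      simp
  have hrange : (range n).filter (· + 1 ≤ m) = range m := by
    ext j
    simp only [mem_filter, mem_range]
    omega
  calc (m : ℝ) * mass n α m
      = ∑ j ∈ range n, if j + 1 ≤ m then α * mass n α (m - (j + 1)) else 0 := by
        rw [hsplit, ← Fin.sum_univ_eq_sum_range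
          (fun j => if j + 1 ≤ m then α * mass n α (m - (j + 1)) else 0)]
        exact sum_congr rfl fun j _ => hterm j
    _ = α * ∑ j ∈ range m, mass n α (m - 1 - j) := by
        rw [← sum_filter, hrange, mul_sum]
        exact sum_congr rfl fun j hj => by congr 2; omega
    _ = α * ∑ k ∈ range m, mass n α k := by rw [sum_range_reflect]

end Ewens

theorem ewens_sampling_formula_normalization_general (n : ℕ) (α : ℝ) :
    ∑ l ∈ (Fintype.piFinset fun _ : Fin n => Finset.range (n + 1)).filter
        (fun l : Fin n → ℕ => ∑ j : Fin n, (j.1 + 1) * l j = n),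
      (Nat.factorial n : ℝ) *
        ∏ j : Fin n, α ^ (l j) / ((j.1 + 1 : ℝ) ^ (l j) * (Nat.factorial (l j) : ℝ)) =
    risingFactorial α n := by
  rw [← mul_sum]
  exact factorial_mul_eq_risingFactorial (Ewens.mass_zero n α) (fun _ hm => Ewens.mul_mass α hm)
    n le_rfl

/-- The Ewens sampling formula weights `n! ∏_j α^{λ_j}/(j^{λ_j} λ_j!)` on the integer
partitions of `n` (encoded as multiplicity functions `λ : Fin n → ℕ` with
`∑_j (j+1)·λ_j = n`; note every multiplicity is automatically at most `n`)
sum to the rising factorial `α^{↑n}`. -/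
theorem ewens_sampling_formula_normalization (n : ℕ) (hn : 1 ≤ n) (α : ℝ) :
    ∑ l ∈ (Fintype.piFinset fun _ : Fin n => Finset.range (n + 1)).filter
        (fun l : Fin n → ℕ => ∑ j : Fin n, (j.1 + 1) * l j = n),
      (Nat.factorial n : ℝ) *
        ∏ j : Fin n, α ^ (l j) / ((j.1 + 1 : ℝ) ^ (l j) * (Nat.factorial (l j) : ℝ)) =
    risingFactorial α n :=
  ewens_sampling_formula_normalization_general n α
end

section
/- Fix an integer n ≥ 1 and real numbers α and θ, and for a set partition R of a finite set define W(R) := [∏_{i=0}^{#R−1}(θ + i·α)] · ∏_{b ∈ R} ∏_{i=1}^{#b−1}(i − α). Then for every set partition P of {1,…,n}, the sum of W(Q) over all set partitions Q of {1,…,n+1} whose restriction to {1,…,n} equals P is (θ + n) · W(P). (This is the consistency of the two-parameter (α,θ) partition distributions under the restriction map D_{n,n+1}.) -/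
/-- The two-parameter `(α,θ)` weight of a set partition `R`:
`W(R) = [∏_{i=0}^{#R−1}(θ+iα)] ∏_{b∈R} ∏_{i=1}^{#b−1}(i−α)`. -/
def W (α θ : ℝ) {s : Finset ℕ} (R : Finpartition s) : ℝ :=
  (∏ i ∈ Finset.range R.parts.card, (θ + i * α)) *
    ∏ b ∈ R.parts, ∏ i ∈ Finset.range (b.card - 1), ((i : ℝ) + 1 - α)

open Finset

namespace TwoParam

variable {n : ℕ} (P : Finpartition (Finset.range n))

lemma notMem_part {b : Finset ℕ} (hb : b ∈ P.parts) : n ∉ b := by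
  intro h
  have := P.le hb h
  simp at this

/-- The partition of `range (n+1)` obtained by adding `{n}` as a new singleton block. -/
def Q0 : Finpartition (Finset.range (n + 1)) :=
  P.extend (b := {n}) (by simp) (by simp [Finset.disjoint_left]; omega)
    (by rw [Finset.sup_eq_union, Finset.union_comm, ← Finset.insert_eq, ← Finset.range_add_one])

lemma Q0_parts : (Q0 P).parts = insert {n} P.parts := Finpartition.extend_parts ..

/-- The partition of `range (n+1)` obtained by adding `n` to the block `t` of `P`. -/
def Qb (t : Finset ℕ) (ht : t ∈ P.parts) : Finpartition (Finset.range (n + 1)) where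
  parts := insert (insert n t) (P.parts.erase t)
  supIndep := by
    rw [Finset.supIndep_iff_pairwiseDisjoint]
    have hd : ∀ b ∈ P.parts.erase t, Disjoint (insert n t) b := by
      intro b hb
      rw [Finset.mem_erase] at hb
      rw [Finset.disjoint_insert_left]
      exact ⟨notMem_part P hb.2, P.disjoint ht hb.2 (Ne.symm hb.1)⟩
    intro a ha b hb hab
    simp only [Finset.coe_insert, Set.mem_insert_iff, Finset.mem_coe] at ha hb
    rcases ha with rfl | ha <;> rcases hb with rfl | hb
    · exact absurd rfl hab
    · exact hd b hb
    · exact (hd a ha).symm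
    · exact P.disjoint (Finset.mem_of_mem_erase ha) (Finset.mem_of_mem_erase hb) hab
  sup_parts := by
    have h1 : t ⊔ (P.parts.erase t).sup id = Finset.range n := by
      rw [show t ⊔ (P.parts.erase t).sup id = (insert t (P.parts.erase t)).sup id from
        (Finset.sup_insert).symm, Finset.insert_erase ht, P.sup_parts]
    rw [Finset.sup_insert, id_eq, Finset.sup_eq_union, Finset.insert_union]
    rw [Finset.sup_eq_union] at h1
    rw [h1, ← Finset.range_add_one]
  bot_notMem := by
    simp only [Finset.bot_eq_empty, Finset.mem_insert, not_or]
    refine ⟨(Finset.insert_nonempty _ _).ne_empty.symm, fun h => ?_⟩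
    exact P.bot_notMem (Finset.mem_of_mem_erase h)

lemma Qb_parts (t : Finset ℕ) (ht : t ∈ P.parts) :
    (Qb P t ht).parts = insert (insert n t) (P.parts.erase t) := rfl


lemma image_erase_id {s : Finset (Finset ℕ)} (h : ∀ b ∈ s, n ∉ b) :
    s.image (fun b => b.erase n) = s := by
  have h2 := Finset.image_congr (f := fun b => b.erase n) (g := id) (s := s)
    (fun b hb => Finset.erase_eq_of_notMem (h b hb))
  rwa [Finset.image_id] at h2

lemma image_id_parts : P.parts.image (fun b => b.erase n) = P.parts :=
  image_erase_id fun b hb => notMem_part P hb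

lemma filter_nonempty_parts : P.parts.filter (fun b => b.Nonempty) = P.parts :=
  Finset.filter_true_of_mem fun b hb => P.nonempty_of_mem_parts hb

lemma res_Q0 : (((Q0 P).parts.image fun b => b.erase n).filter fun b => b.Nonempty) = P.parts := by
  rw [Q0_parts, Finset.image_insert, image_id_parts, Finset.erase_singleton,
    Finset.filter_insert, if_neg (by simp), filter_nonempty_parts]

lemma res_Qb (t : Finset ℕ) (ht : t ∈ P.parts) :
    (((Qb P t ht).parts.image fun b => b.erase n).filter fun b => b.Nonempty) = P.parts := by
  have hnt : n ∉ t := notMem_part P ht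
  have h1 : (P.parts.erase t).image (fun b => b.erase n) = P.parts.erase t :=
    image_erase_id fun b hb => notMem_part P (Finset.mem_of_mem_erase hb)
  rw [Qb_parts, Finset.image_insert, Finset.erase_insert hnt, h1, Finset.filter_insert,
    if_pos (P.nonempty_of_mem_parts ht)]
  rw [Finset.filter_true_of_mem fun b hb =>
    P.nonempty_of_mem_parts (Finset.mem_of_mem_erase hb), Finset.insert_erase ht]

lemma fiber_forward (Q : Finpartition (Finset.range (n + 1)))
    (hQ : ((Q.parts.image fun b => b.erase n).filter fun b => b.Nonempty) = P.parts) :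
    Q = Q0 P ∨ ∃ (t : Finset ℕ) (ht : t ∈ P.parts), Q = Qb P t ht := by
  obtain ⟨c, hc, hnc⟩ := Q.exists_mem (a := n) (by simp)
  have hne : ∀ b ∈ Q.parts.erase c, n ∉ b := by
    intro b hb hn
    rw [Finset.mem_erase] at hb
    exact hb.1 (Q.eq_of_mem_parts hb.2 hc hn hnc)
  have himg : Q.parts.image (fun b => b.erase n) = insert (c.erase n) (Q.parts.erase c) := by
    conv_lhs => rw [← Finset.insert_erase hc]
    rw [Finset.image_insert, image_erase_id hne]
  have hfilter : (Q.parts.erase c).filter (fun b => b.Nonempty) = Q.parts.erase c :=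
    Finset.filter_true_of_mem fun b hb => Q.nonempty_of_mem_parts (Finset.mem_of_mem_erase hb)
  rw [himg, Finset.filter_insert] at hQ
  by_cases h : (c.erase n).Nonempty
  · right
    rw [if_pos h, hfilter] at hQ
    have ht : c.erase n ∈ P.parts := hQ ▸ Finset.mem_insert_self _ _
    refine ⟨c.erase n, ht, ?_⟩
    have htn : c.erase n ∉ Q.parts.erase c := by
      intro hmem
      rw [Finset.mem_erase] at hmem
      have hdisj : Disjoint (c.erase n) (c.erase n) :=
        (Q.disjoint hmem.2 hc hmem.1).mono_right (Finset.erase_subset n c)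
      rw [disjoint_self, Finset.bot_eq_empty] at hdisj
      exact h.ne_empty hdisj
    have hE : P.parts.erase (c.erase n) = Q.parts.erase c := by
      rw [← hQ, Finset.erase_insert htn]
    apply Finpartition.ext
    rw [Qb_parts, hE, Finset.insert_erase hnc, Finset.insert_erase hc]
  · left
    rw [Finset.not_nonempty_iff_eq_empty] at h
    have hcn : c = {n} := by
      rw [Finset.eq_singleton_iff_unique_mem]
      refine ⟨hnc, fun x hx => ?_⟩
      by_contra hxn
      have : x ∈ c.erase n := Finset.mem_erase.mpr ⟨hxn, hx⟩
      simp [h] at this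
    rw [if_neg (by simp [h]), hfilter] at hQ
    apply Finpartition.ext
    rw [Q0_parts, ← hQ, ← hcn, Finset.insert_erase hc]


lemma singleton_notMem : ({n} : Finset ℕ) ∉ P.parts :=
  fun h => notMem_part P h (Finset.mem_singleton_self n)

lemma singleton_notMem_Qb (t : Finset ℕ) (ht : t ∈ P.parts) :
    ({n} : Finset ℕ) ∉ (Qb P t ht).parts := by
  rw [Qb_parts, Finset.mem_insert]
  rintro (h | h)
  · obtain ⟨x, hx⟩ := P.nonempty_of_mem_parts ht
    have hx2 : x ∈ insert n t := Finset.mem_insert_of_mem hx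
    rw [← h, Finset.mem_singleton] at hx2
    exact notMem_part P ht (hx2 ▸ hx)
  · exact notMem_part P (Finset.mem_of_mem_erase h) (Finset.mem_singleton_self n)

lemma Qb_inj {t1 t2 : Finset ℕ} (h1 : t1 ∈ P.parts) (h2 : t2 ∈ P.parts)
    (h : Qb P t1 h1 = Qb P t2 h2) : t1 = t2 := by
  have hp : insert n t1 ∈ (Qb P t2 h2).parts := by
    rw [← h, Qb_parts]; exact Finset.mem_insert_self _ _
  rw [Qb_parts, Finset.mem_insert] at hp
  rcases hp with hp | hp
  · have h3 := congrArg (fun s => Finset.erase s n) hp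
    simpa [Finset.erase_insert (notMem_part P h1),
      Finset.erase_insert (notMem_part P h2)] using h3
  · exact (notMem_part P (Finset.mem_of_mem_erase hp) (Finset.mem_insert_self n t1)).elim

lemma fiber_eq :
    ((Finset.univ : Finset (Finpartition (Finset.range (n + 1)))).filter
        fun Q => ((Q.parts.image fun b => b.erase n).filter fun b => b.Nonempty) = P.parts) =
      insert (Q0 P) (P.parts.attach.image fun t => Qb P t.1 t.2) := by
  ext Q
  simp only [Finset.mem_filter, Finset.mem_univ, true_and, Finset.mem_insert, Finset.mem_image,
    Finset.mem_attach, true_and, Subtype.exists]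
  constructor
  · intro h
    rcases fiber_forward P Q h with h | ⟨t, ht, h⟩
    · exact Or.inl h
    · exact Or.inr ⟨t, ht, h.symm⟩
  · rintro (rfl | ⟨t, ht, rfl⟩)
    · exact res_Q0 P
    · exact res_Qb P t ht

lemma W_Q0 (α θ : ℝ) : W α θ (Q0 P) = (θ + P.parts.card * α) * W α θ P := by
  rw [W, W, Q0_parts, Finset.card_insert_of_notMem (singleton_notMem P),
    Finset.prod_insert (singleton_notMem P), Finset.prod_range_succ]
  simp only [Finset.card_singleton, Nat.sub_self, Finset.range_zero, Finset.prod_empty]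
  ring

lemma W_Qb (α θ : ℝ) (t : Finset ℕ) (ht : t ∈ P.parts) :
    W α θ (Qb P t ht) = ((t.card : ℝ) - α) * W α θ P := by
  have hnt : n ∉ t := notMem_part P ht
  have htc : 1 ≤ t.card := Finset.card_pos.mpr (P.nonempty_of_mem_parts ht)
  have hmem : insert n t ∉ P.parts.erase t := fun h =>
    notMem_part P (Finset.mem_of_mem_erase h) (Finset.mem_insert_self n t)
  have hk : P.parts.card - 1 + 1 = P.parts.card :=
    Nat.succ_pred_eq_of_pos (Finset.card_pos.mpr ⟨t, ht⟩)
  have hcard : (insert n t).card - 1 = t.card := by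
    rw [Finset.card_insert_of_notMem hnt]; omega
  rw [W, W, Qb_parts, Finset.card_insert_of_notMem hmem, Finset.card_erase_of_mem ht, hk,
    Finset.prod_insert hmem, hcard]
  have hsplit : ∏ i ∈ Finset.range t.card, ((i : ℝ) + 1 - α)
      = (∏ i ∈ Finset.range (t.card - 1), ((i : ℝ) + 1 - α)) * ((t.card : ℝ) - α) := by
    conv_lhs => rw [show t.card = (t.card - 1) + 1 by omega]
    rw [Finset.prod_range_succ]
    congr 1
    rw [Nat.cast_sub htc]
    push_cast
    ring
  rw [hsplit, ← Finset.mul_prod_erase P.parts _ ht]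
  ring

end TwoParam

/-- Consistency of the two-parameter `(α,θ)` partition distributions under restriction:
for a set partition `P` of `{0,…,n−1}`, the sum of `W(Q)` over all set partitions `Q` of
`{0,…,n}` whose restriction to `{0,…,n−1}` (blocks `b ∩ {0,…,n−1}`, discarding the empty
set) equals `P` is `(θ + n)·W(P)`. -/
theorem two_parameter_consistency (n : ℕ) (hn : 1 ≤ n) (α θ : ℝ)
    (P : Finpartition (Finset.range n)) :
    ∑ Q ∈ (Finset.univ : Finset (Finpartition (Finset.range (n + 1)))).filter
        (fun Q => ((Q.parts.image fun b => b.erase n).filter fun b => b.Nonempty) = P.parts),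
      W α θ Q =
    (θ + n) * W α θ P := by
  classical
  have hnot : TwoParam.Q0 P ∉ P.parts.attach.image fun t => TwoParam.Qb P t.1 t.2 := by
    intro hmem
    rw [Finset.mem_image] at hmem
    obtain ⟨t, _, h⟩ := hmem
    have h2 : ({n} : Finset ℕ) ∈ (TwoParam.Qb P t.1 t.2).parts := by
      rw [h, TwoParam.Q0_parts]; exact Finset.mem_insert_self _ _
    exact TwoParam.singleton_notMem_Qb P t.1 t.2 h2
  have hinj : ∀ t ∈ P.parts.attach, ∀ u ∈ P.parts.attach,
      TwoParam.Qb P t.1 t.2 = TwoParam.Qb P u.1 u.2 → t = u :=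
    fun t _ u _ h => Subtype.ext (TwoParam.Qb_inj P t.2 u.2 h)
  rw [TwoParam.fiber_eq P, Finset.sum_insert hnot, Finset.sum_image hinj, TwoParam.W_Q0 P]
  have hcong : ∑ t ∈ P.parts.attach, W α θ (TwoParam.Qb P t.1 t.2)
      = ∑ t ∈ P.parts.attach, ((t.1.card : ℝ) - α) * W α θ P :=
    Finset.sum_congr rfl fun t _ => TwoParam.W_Qb P α θ t.1 t.2
  rw [hcong, ← Finset.sum_mul]
  have hsum : ∑ t ∈ P.parts.attach, ((t.1.card : ℝ) - α)
      = (n : ℝ) - P.parts.card * α := by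
    rw [Finset.sum_attach P.parts (fun b => (b.card : ℝ) - α), Finset.sum_sub_distrib,
      Finset.sum_const, ← Nat.cast_sum, P.sum_card_parts, Finset.card_range, nsmul_eq_mul]
  rw [hsum]
  ring
end

section
/- Fix an integer n ≥ 1 and define the delete-and-repair map ψ from permutations of {1,…,n+1} to permutations of {1,…,n} by: ψ(σ')(i) = σ'(n+1) if σ'(i) = n+1, and ψ(σ')(i) = σ'(i) otherwise (this is a well-defined permutation of {1,…,n}). Then for every real number α and every permutation σ of {1,…,n}, the sum of α^{#σ'} over all permutations σ' of {1,…,n+1} with ψ(σ') = σ equals (α + n)·α^{#σ}, where # denotes the number of cycles. (This is the consistency of the Ewens(α) distributions Q_n(σ;α) = α^{#σ}/α^{↑n} on permutations under delete-and-repair.) -/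
/-!
Extend `σ` to `E` on `Fin (n + 1)` by fixing `n`. The fibre of the delete-and-repair map over `σ`
is `{swap n x * E | x}`, parametrised by `x = σ' n`: the point `n` is inserted into the cycle of
`E` through `x`, just before `x`. For `x = n` this adds a fixed point, so `#σ' = #σ + 1`;
otherwise `#σ' = #σ`, because multiplying by the transposition `(n, σ' n)` splits `n` off its
cycle and so raises the number of cycles by exactly one. Summing gives `α^(#σ + 1) + n α^#σ`.
-/

/-- The number of cycles of a permutation, fixed points counting as cycles of length 1. -/
def cycleCount {n : ℕ} (σ : Equiv.Perm (Fin n)) : ℕ :=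
  σ.cycleType.card + (Finset.univ.filter fun i => σ i = i).card

open Equiv Finset

namespace Equiv.Perm

variable {α : Type*} [Fintype α] [DecidableEq α]

theorem IsCycle.card_cycleType_swap_mul_add_card_support {c : Perm α} (hc : c.IsCycle) {a : α}
    (ha : c a ≠ a) :
    Multiset.card (swap a (c a) * c).cycleType + #c.support =
      Multiset.card c.cycleType + #(swap a (c a) * c).support + 1 := by
  by_cases hcca : c (c a) = a
  · have hc2 := hc.eq_swap_of_apply_apply_eq_self ha hcca
    generalize c a = b at *
    subst hc2
    have hab : a ≠ b := ha.symm
    simp [(isCycle_swap hab).cycleType, card_support_swap hab]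
  · have hc' := hc.swap_mul ha hcca
    have ha_mem : a ∈ c.support := mem_support.2 ha
    rw [hc.cycleType, hc'.cycleType, support_swap_mul_eq c a hcca, sdiff_singleton_eq_erase,
      Multiset.card_singleton, Multiset.card_singleton, ← card_erase_add_one ha_mem]
    omega

theorem card_cycleType_swap_mul_add_card_support {π : Perm α} {a : α} (ha : π a ≠ a) :
    Multiset.card (swap a (π a) * π).cycleType + #π.support =
      Multiset.card π.cycleType + #(swap a (π a) * π).support + 1 := by
  -- Only the cycle `c` through `a` changes: `π = c * h` with `h` disjoint from `c`.
  set c := π.cycleOf a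
  have hc : c.IsCycle := isCycle_cycleOf π ha
  have hca : c a = π a := cycleOf_apply_self π a
  have hdisj : Disjoint c (π * c⁻¹) :=
    (disjoint_mul_inv_of_mem_cycleFactorsFinset
      (cycleOf_mem_cycleFactorsFinset_iff.2 (mem_support.2 ha))).symm
  have hπ : c * (π * c⁻¹) = π := by rw [hdisj.commute.eq, inv_mul_cancel_right]
  have hdisj' : Disjoint (swap a (c a) * c) (π * c⁻¹) :=
    hdisj.mono (fun y hy => (mem_support_swap_mul_imp_mem_support_ne hy).1) le_rfl
  have hcycle := hc.card_cycleType_swap_mul_add_card_support (hca ▸ ha)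
  clear_value c
  generalize π * c⁻¹ = h at hdisj hdisj' hπ
  subst hπ
  rw [← hca, ← mul_assoc, hdisj.cycleType_mul, hdisj'.cycleType_mul, hdisj.card_support_mul,
    hdisj'.card_support_mul, Multiset.card_add, Multiset.card_add]
  omega

theorem sum_filter_swap_apply_mul_eq {M : Type*} [AddCommMonoid M] (f : Perm α → M)
    {τ : Perm α} {a : α} (ha : τ a = a) :
    ∑ π with swap a (π a) * π = τ, f π = ∑ x, f (swap a x * τ) := by
  have happly : ∀ x, (swap a x * τ) a = x := fun x => by rw [mul_apply, ha, swap_apply_left]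
  refine (sum_nbij' (fun x => swap a x * τ) (fun π => π a) ?_ ?_ ?_ ?_ fun _ _ => rfl).symm
  · intro x _
    simp [happly, swap_mul_self_mul]
  · simp
  · intro x _
    exact happly x
  · intro π hπ
    rw [← (mem_filter.1 hπ).2, swap_mul_self_mul]

end Equiv.Perm

open Equiv.Perm

theorem cycleCount_add_card_support {n : ℕ} (σ : Perm (Fin n)) :
    cycleCount σ + #σ.support = Multiset.card σ.cycleType + n := by
  have hfix : ({i | σ i = i} : Finset (Fin n)) = σ.supportᶜ := by
    ext
    simp
  rw [cycleCount, hfix, add_assoc, card_compl_add_card, Fintype.card_fin]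

theorem cycleCount_swap_mul_add_one {n : ℕ} {τ : Perm (Fin n)} {a b : Fin n} (ha : τ a = a)
    (hab : a ≠ b) : cycleCount (swap a b * τ) + 1 = cycleCount τ := by
  have hπa : (swap a b * τ) a = b := by rw [mul_apply, ha, swap_apply_left]
  have hsplit := card_cycleType_swap_mul_add_card_support (hπa.symm ▸ hab.symm)
  rw [hπa, swap_mul_self_mul] at hsplit
  have := cycleCount_add_card_support τ
  have := cycleCount_add_card_support (swap a b * τ)
  omega

theorem extendDomain_finSuccAboveEquiv_apply_self {n : ℕ} (σ : Perm (Fin n)) (p : Fin (n + 1)) :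
    σ.extendDomain (finSuccAboveEquiv p) p = p :=
  extendDomain_apply_not_subtype _ _ (by simp)

theorem extendDomain_finSuccAboveEquiv_apply_succAbove {n : ℕ} (σ : Perm (Fin n))
    (p : Fin (n + 1)) (i : Fin n) :
    σ.extendDomain (finSuccAboveEquiv p) (p.succAbove i) = p.succAbove (σ i) := by
  simpa [finSuccAboveEquiv_apply] using σ.extendDomain_apply_image (finSuccAboveEquiv p) i

theorem cycleCount_extendDomain_finSuccAboveEquiv {n : ℕ} (σ : Perm (Fin n)) (p : Fin (n + 1)) :
    cycleCount (σ.extendDomain (finSuccAboveEquiv p)) = cycleCount σ + 1 := by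
  have hcycleType := cycleType_extendDomain (finSuccAboveEquiv p) (g := σ)
  have hsupport : #(σ.extendDomain (finSuccAboveEquiv p)).support = #σ.support := by
    rw [← sum_cycleType, ← sum_cycleType, hcycleType]
  have := cycleCount_add_card_support σ
  have := cycleCount_add_card_support (σ.extendDomain (finSuccAboveEquiv p))
  rw [hcycleType, hsupport] at this
  omega

/-- The delete-and-repair image of `π` is the restriction of `swap (last n) (π (last n)) * π`,
which fixes `last n`. -/
theorem swap_last_mul_eq_extendDomain_iff {n : ℕ} (σ : Perm (Fin n)) (π : Perm (Fin (n + 1))) :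
    swap (Fin.last n) (π (Fin.last n)) * π = σ.extendDomain (finSuccAboveEquiv (Fin.last n)) ↔
      ∀ i : Fin n, Fin.castSucc (σ i) =
        if π (Fin.castSucc i) = Fin.last n then π (Fin.last n) else π (Fin.castSucc i) := by
  have hE (i : Fin n) :
      σ.extendDomain (finSuccAboveEquiv (Fin.last n)) i.castSucc = (σ i).castSucc := by
    simpa using extendDomain_finSuccAboveEquiv_apply_succAbove σ (Fin.last n) i
  have hπ (i : Fin n) : (swap (Fin.last n) (π (Fin.last n)) * π) i.castSucc =
      if π i.castSucc = Fin.last n then π (Fin.last n) else π i.castSucc := by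
    rw [mul_apply, swap_apply_def, if_neg (π.injective.ne (Fin.castSucc_lt_last i).ne)]
  have hlast : (swap (Fin.last n) (π (Fin.last n)) * π) (Fin.last n) =
      σ.extendDomain (finSuccAboveEquiv (Fin.last n)) (Fin.last n) := by
    rw [mul_apply, swap_apply_right, extendDomain_finSuccAboveEquiv_apply_self]
  rw [Equiv.ext_iff, Fin.forall_fin_succ']
  simp only [hE, hπ, hlast, and_true]
  exact forall_congr' fun _ => eq_comm

theorem ewens_permutation_consistency_general (n : ℕ) (α : ℝ)
    (σ : Equiv.Perm (Fin n)) :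
    ∑ σ' ∈ (Finset.univ : Finset (Equiv.Perm (Fin (n + 1)))).filter
        (fun σ' => ∀ i : Fin n, Fin.castSucc (σ i) =
          if σ' (Fin.castSucc i) = Fin.last n then σ' (Fin.last n)
          else σ' (Fin.castSucc i)),
      α ^ cycleCount σ' =
    (α + n) * α ^ cycleCount σ := by
  set E := σ.extendDomain (finSuccAboveEquiv (Fin.last n))
  have hE : E (Fin.last n) = Fin.last n := extendDomain_finSuccAboveEquiv_apply_self σ _
  have hinsert (j : Fin n) : cycleCount (swap (Fin.last n) j.castSucc * E) = cycleCount σ := by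
    have := cycleCount_swap_mul_add_one hE (Fin.castSucc_lt_last j).ne'
    rw [cycleCount_extendDomain_finSuccAboveEquiv] at this
    omega
  rw [filter_congr fun π _ => (swap_last_mul_eq_extendDomain_iff σ π).symm,
    sum_filter_swap_apply_mul_eq _ hE, Fin.sum_univ_castSucc, swap_self, ← Perm.one_def, one_mul,
    cycleCount_extendDomain_finSuccAboveEquiv]
  simp only [hinsert, sum_const, card_univ, Fintype.card_fin, nsmul_eq_mul]
  ring

/-- Consistency of the Ewens(α) distributions on permutations under delete-and-repair:
for the map `ψ` sending a permutation `σ'` of `{0,…,n}` to the permutation of `{0,…,n−1}`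
with `ψ(σ')(i) = σ'(n)` if `σ'(i) = n` and `ψ(σ')(i) = σ'(i)` otherwise, the sum of
`α^{#σ'}` over all `σ'` with `ψ(σ') = σ` equals `(α + n)·α^{#σ}`. -/
theorem ewens_permutation_consistency (n : ℕ) (hn : 1 ≤ n) (α : ℝ)
    (σ : Equiv.Perm (Fin n)) :
    ∑ σ' ∈ (Finset.univ : Finset (Equiv.Perm (Fin (n + 1)))).filter
        (fun σ' => ∀ i : Fin n, Fin.castSucc (σ i) =
          if σ' (Fin.castSucc i) = Fin.last n then σ' (Fin.last n)
          else σ' (Fin.castSucc i)),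
      α ^ cycleCount σ' =
    (α + n) * α ^ cycleCount σ :=
  ewens_permutation_consistency_general n α σ
end

section
/- Fix integers n ≥ 1 and j ≥ 2 and let π' be a j-balanced set partition of {1,…,n} × {1,…,j}. Then the number of (j−1)-tuples (σ_2,…,σ_j) of permutations of {1,…,n} such that, for every m ∈ {1,…,n} and every i ∈ {2,…,j}, the elements (m,1) and (σ_i(m), i) lie in the same block of π', equals ∏_{b ∈ π'} ((#b/j)!)^{j−1}. -/
/-- A set partition of `{1,…,n} × {1,…,j}` is `j`-balanced if every block contains an
equal number of elements of each of the `j` types (the type of an element being its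
second coordinate). -/
def IsBalanced {n j : ℕ} (π : Finpartition (Finset.univ : Finset (Fin n × Fin j))) : Prop :=
  ∀ b ∈ π.parts, ∀ t t' : Fin j,
    (b.filter fun p => p.2 = t).card = (b.filter fun p => p.2 = t').card

/-!
Identify each `(m, t)` with the block of `π'` containing it. The condition on `σ_i` says that
`σ_i` carries the fibres of `m ↦ [(m, 1)]` onto those of `m ↦ [(m, i)]`, and balancedness makes
both fibres over a block `b` have `#b / j` elements. The permutations with this property are a
coset of the stabilizer of `m ↦ [(m, 1)]`, so there are `∏_b (#b / j)!` of them for each `i`.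
-/

open Finset

theorem Equiv.Perm.card_comp_eq_of_card_fiber_eq {α β : Type*} [Fintype α] [DecidableEq α]
    [Fintype β] [DecidableEq β] (f g : α → β)
    (h : ∀ y, Fintype.card {x // f x = y} = Fintype.card {x // g x = y}) :
    Nat.card {σ : Equiv.Perm α // g ∘ σ = f} =
      ∏ y, (Fintype.card {x // f x = y}).factorial := by
  obtain ⟨τ, hτ⟩ : ∃ τ : Equiv.Perm α, ∀ x, g (τ x) = f x :=
    ⟨_, Equiv.ofFiberEquiv_map fun y => Fintype.equivOfCardEq (h y)⟩
  have hτ' : f ∘ ⇑τ⁻¹ = g := funext fun x => by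
    rw [Function.comp_apply, ← hτ]
    exact congrArg g (τ.apply_symm_apply x)
  have hcoset : ∀ σ : Equiv.Perm α, g ∘ σ = f ↔ f ∘ ⇑(τ⁻¹ * σ) = f := fun σ => by
    rw [Equiv.Perm.coe_mul, ← Function.comp_assoc, hτ']
  rw [Nat.card_congr (Equiv.subtypeEquiv (q := fun ρ : Equiv.Perm α => f ∘ ⇑ρ = f)
    (Equiv.mulLeft τ⁻¹) hcoset), Nat.card_eq_fintype_card, DomMulAct.stabilizer_card]

theorem Finset.card_filter_snd_eq {α τ : Type*} [Fintype α] [DecidableEq α] [DecidableEq τ]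
    (s : Finset (α × τ)) (t : τ) : #{a | (a, t) ∈ s} = #{p ∈ s | p.2 = t} := by
  refine card_nbij' (·, t) Prod.fst ?_ ?_ (fun _ _ => rfl) ?_ <;> intro p hp
  · simpa using hp
  · obtain ⟨hps, rfl⟩ := mem_filter.1 hp
    simpa using hps
  · exact Prod.ext rfl (mem_filter.1 hp).2.symm

namespace Finpartition

variable {α τ : Type*} [Fintype α] [Fintype τ] [DecidableEq α] [DecidableEq τ]
  (π : Finpartition (univ : Finset (α × τ)))

-- Valued in `π.parts` so that fibres of `π.partAt t` are indexed by the blocks alone.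
def partAt (t : τ) (a : α) : π.parts := ⟨π.part (a, t), π.part_mem.2 (mem_univ _)⟩

theorem partAt_eq_partAt_iff {t t' : τ} {a a' : α} :
    π.partAt t' a' = π.partAt t a ↔ ∃ b ∈ π.parts, (a, t) ∈ b ∧ (a', t') ∈ b := by
  rw [← mem_part_iff_exists, mem_part_iff_part_eq_part _ (mem_univ _) (mem_univ _)]
  exact Subtype.ext_iff.trans eq_comm

theorem card_partAt_fiber (t : τ) {b : Finset (α × τ)} (hb : b ∈ π.parts) :
    Fintype.card {a // π.partAt t a = ⟨b, hb⟩} = #{p ∈ b | p.2 = t} := by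
  rw [← card_filter_snd_eq, Fintype.card_subtype]
  simp only [partAt, Subtype.mk.injEq, part_eq_iff_mem _ hb]

end Finpartition

theorem IsBalanced.card_filter_snd {n j : ℕ} {π : Finpartition (univ : Finset (Fin n × Fin j))}
    (hπ : IsBalanced π) {b : Finset (Fin n × Fin j)} (hb : b ∈ π.parts) (t : Fin j) :
    #{p ∈ b | p.2 = t} = #b / j := by
  have hsum : #b = j * #{p ∈ b | p.2 = t} := by
    rw [card_eq_sum_card_fiberwise (f := Prod.snd) (t := univ) fun _ _ => mem_univ _,
      sum_congr rfl fun t' _ => hπ b hb t' t, sum_const, card_univ, Fintype.card_fin, smul_eq_mul]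
  rw [hsum, Nat.mul_div_cancel_left _ (Fin.pos t)]

/-- For a `j`-balanced set partition `π'` of `{1,…,n} × {1,…,j}` the number of
`(j−1)`-tuples `(σ_2,…,σ_j)` of permutations of `{1,…,n}` such that `(m,1)` and
`(σ_i(m),i)` always lie in the same block of `π'` is `∏_{b∈π'} ((#b/j)!)^{j−1}`. -/
theorem card_matchings_of_balanced (n j : ℕ) (hj : 2 ≤ j)
    (π' : Finpartition (Finset.univ : Finset (Fin n × Fin j))) (hπ' : IsBalanced π') :
    Nat.card {σ : Fin (j - 1) → Equiv.Perm (Fin n) //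
        ∀ m : Fin n, ∀ i : Fin (j - 1), ∃ b ∈ π'.parts,
          (m, (⟨0, by omega⟩ : Fin j)) ∈ b ∧
            (σ i m, (⟨i.1 + 1, by have := i.2; omega⟩ : Fin j)) ∈ b} =
      ∏ b ∈ π'.parts, (Nat.factorial (b.card / j)) ^ (j - 1) := by
  classical
  let t₀ : Fin j := ⟨0, by omega⟩
  let tSucc (i : Fin (j - 1)) : Fin j := ⟨i.1 + 1, by have := i.2; omega⟩
  let Matches (i : Fin (j - 1)) (τ : Equiv.Perm (Fin n)) : Prop :=
    π'.partAt (tSucc i) ∘ τ = π'.partAt t₀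
  have hcond : ∀ σ : Fin (j - 1) → Equiv.Perm (Fin n),
      (∀ m i, ∃ b ∈ π'.parts, (m, t₀) ∈ b ∧ (σ i m, tSucc i) ∈ b) ↔
        ∀ i, Matches i (σ i) := by
    intro σ
    simp only [Matches, funext_iff, Function.comp_apply, Finpartition.partAt_eq_partAt_iff]
    exact forall_comm
  have hfiber : ∀ (t : Fin j) (b : π'.parts),
      Fintype.card {m // π'.partAt t m = b} = #b.1 / j := fun t ⟨b, hb⟩ => by
    rw [π'.card_partAt_fiber t hb, hπ'.card_filter_snd hb t]
  have hcount : ∀ i, Nat.card {τ // Matches i τ} = ∏ b ∈ π'.parts, (#b / j).factorial := by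
    intro i
    rw [Equiv.Perm.card_comp_eq_of_card_fiber_eq _ _ fun b => (hfiber _ b).trans (hfiber _ b).symm]
    simp only [hfiber]
    exact prod_coe_sort π'.parts fun b => (#b / j).factorial
  rw [Nat.card_congr ((Equiv.subtypeEquivRight hcond).trans Equiv.subtypePiEquivPi), Nat.card_pi]
  simp only [hcount, prod_const, card_univ, Fintype.card_fin, prod_pow]
end

section
/- Fix integers n ≥ 1 and j ≥ 1, and for k ∈ {1,…,n} let u^{(k)} := {(k−1)j+1,…,kj} ⊆ {1,…,nj} be the k-th consecutive group of size j. Let π' be a j-even set partition of {1,…,nj}. Then the number of pairs (π, σ), where π is a set partition of {1,…,n} and σ is a permutation of {1,…,nj}, such that π' = { σ(⋃_{k ∈ b} u^{(k)}) : b ∈ π } (i.e., the images under σ of the unions of the groups indexed by the blocks of π are exactly the blocks of π'), equals n! · ∏_{b ∈ π'} (#b)! / (#b/j)!. -/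
/-- A set partition is even of order `j` (`j`-even) if every block size is divisible
by `j`. -/
def IsEven {N : ℕ} (j : ℕ) (π : Finpartition (Finset.univ : Finset (Fin N))) : Prop :=
  ∀ b ∈ π.parts, j ∣ b.card

/-- The `k`-th consecutive group of size `j` in `{0,…,nj−1}`: the elements
`{kj, kj+1, …, (k+1)j−1}`. -/
def group (n j : ℕ) (k : Fin n) : Finset (Fin (n * j)) :=
  Finset.univ.filter fun x => k.1 * j ≤ x.1 ∧ x.1 < (k.1 + 1) * j

namespace CardPairsAux

open Finset

/-! ### Generic counting lemmas -/

variable {α β : Type*} [Fintype α] [Fintype β]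

lemma natCard_sigma {ι : Type*} [Fintype ι] (γ : ι → Type*) [∀ i, Finite (γ i)] :
    Nat.card (Σ i, γ i) = ∑ i, Nat.card (γ i) := by
  classical
  have : ∀ i, Fintype (γ i) := fun i => Fintype.ofFinite _
  simp [Nat.card_eq_fintype_card, Fintype.card_sigma]

/-- Permutations intertwining two functions correspond to families of bijections
between fibers. -/
def permCompEquiv (g h : α → β) :
    {σ : Equiv.Perm α // g ∘ σ = h} ≃ ∀ b : β, ({x // h x = b} ≃ {x // g x = b}) where
  toFun σ b :=
    { toFun := fun x => ⟨σ.1 x.1, by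
        have := congrFun σ.2 x.1
        simp only [Function.comp_apply] at this
        rw [this, x.2]⟩
      invFun := fun y => ⟨σ.1.symm y.1, by
        have := congrFun σ.2 (σ.1.symm y.1)
        simp only [Function.comp_apply, Equiv.apply_symm_apply] at this
        rw [← this]; exact y.2⟩
      left_inv := fun x => Subtype.ext (σ.1.symm_apply_apply x.1)
      right_inv := fun y => Subtype.ext (σ.1.apply_symm_apply y.1) }
  invFun e := ⟨(Equiv.sigmaFiberEquiv h).symm.trans
      ((Equiv.sigmaCongrRight e).trans (Equiv.sigmaFiberEquiv g)), by
    funext x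
    exact (e (h x) ⟨x, rfl⟩).2⟩
  left_inv σ := Subtype.ext (Equiv.ext fun x => rfl)
  right_inv e := by
    funext b
    ext ⟨x, hx⟩
    subst hx
    rfl

lemma natCard_perm_comp (g h : α → β) :
    Nat.card {σ : Equiv.Perm α // g ∘ σ = h} =
      ∏ b : β, if Nat.card {x // h x = b} = Nat.card {x // g x = b}
        then (Nat.card {x // g x = b}).factorial else 0 := by
  classical
  rw [Nat.card_congr (permCompEquiv g h), Nat.card_pi]
  refine Finset.prod_congr rfl fun b _ => ?_
  by_cases hcb : Nat.card {x // h x = b} = Nat.card {x // g x = b}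
  · rw [if_pos hcb, Nat.card_eq_fintype_card,
      Fintype.card_equiv (Fintype.equivOfCardEq (by
        rw [← Nat.card_eq_fintype_card, ← Nat.card_eq_fintype_card]; exact hcb)),
      ← Nat.card_eq_fintype_card, hcb]
  · rw [if_neg hcb]
    have : IsEmpty ({x // h x = b} ≃ {x // g x = b}) :=
      ⟨fun e => hcb (by
        rw [Nat.card_eq_fintype_card, Nat.card_eq_fintype_card]
        exact Fintype.card_congr e)⟩
    exact Nat.card_of_isEmpty

lemma exists_fun_fiber [DecidableEq β] (m : β → ℕ) (h : ∑ b, m b = Fintype.card α) :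
    ∃ f : α → β, ∀ b, Nat.card {a // f a = b} = m b := by
  have e : α ≃ Σ b, Fin (m b) := Fintype.equivOfCardEq (by simp [Fintype.card_sigma, h])
  refine ⟨fun a => (e a).1, fun b => ?_⟩
  have e2 : {a // (e a).1 = b} ≃ {s : Σ b, Fin (m b) // s.1 = b} :=
    e.subtypeEquiv fun a => Iff.rfl
  have e3 : {s : Σ b, Fin (m b) // s.1 = b} ≃ Fin (m b) :=
    { toFun := fun s => s.2 ▸ s.1.2
      invFun := fun x => ⟨⟨b, x⟩, rfl⟩
      left_inv := by rintro ⟨⟨b', x⟩, rfl⟩; rfl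
      right_inv := fun x => rfl }
  rw [Nat.card_congr (e2.trans e3), Nat.card_eq_fintype_card, Fintype.card_fin]

lemma prod_ite_indicator {ι : Type*} [Fintype ι] (p : ι → Prop) [DecidablePred p] (v : ι → ℕ) :
    ∏ b : ι, (if p b then v b else 0) = (if ∀ b, p b then 1 else 0) * ∏ b : ι, v b := by
  by_cases h : ∀ b, p b
  · rw [if_pos h, one_mul]
    exact Finset.prod_congr rfl fun b _ => if_pos (h b)
  · rw [if_neg h, zero_mul]
    push_neg at h
    obtain ⟨b, hb⟩ := h
    exact Finset.prod_eq_zero (Finset.mem_univ b) (if_neg hb)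

/-! ### The specific setting -/

variable (n j : ℕ)

def q (x : Fin (n * j)) : Fin n :=
  ⟨x.1 / j, Nat.div_lt_of_lt_mul (lt_of_lt_of_eq x.2 (mul_comm n j))⟩

def sec (hj : 0 < j) (k : Fin n) : Fin (n * j) :=
  ⟨k.1 * j, mul_lt_mul_of_pos_right k.2 hj⟩

lemma q_eq_iff (hj : 0 < j) (x : Fin (n * j)) (k : Fin n) :
    q n j x = k ↔ k.1 * j ≤ x.1 ∧ x.1 < (k.1 + 1) * j := by
  constructor
  · rintro rfl
    refine ⟨Nat.div_mul_le_self _ _, ?_⟩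
    have h1 := Nat.div_add_mod x.1 j
    have h2 := Nat.mod_lt x.1 hj
    show x.1 < (x.1 / j + 1) * j
    rw [add_mul, one_mul]
    nlinarith [Nat.div_mul_le_self x.1 j]
  · rintro ⟨h1, h2⟩
    exact Fin.ext (Nat.div_eq_of_lt_le h1 h2)

lemma q_sec (hj : 0 < j) (k : Fin n) : q n j (sec n j hj k) = k :=
  Fin.ext (Nat.mul_div_cancel k.1 hj)

lemma mem_group_iff (hj : 0 < j) {x : Fin (n * j)} {k : Fin n} :
    x ∈ group n j k ↔ q n j x = k := by
  rw [q_eq_iff n j hj]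
  simp [group]

lemma mem_biUnion_group_iff (hj : 0 < j) (c : Finset (Fin n)) (x : Fin (n * j)) :
    x ∈ c.biUnion (group n j) ↔ q n j x ∈ c := by
  simp only [Finset.mem_biUnion, mem_group_iff n j hj]
  constructor
  · rintro ⟨k, hk, rfl⟩; exact hk
  · intro h; exact ⟨_, h, rfl⟩

variable (π' : Finpartition (Finset.univ : Finset (Fin (n * j))))

noncomputable def blk (x : Fin (n * j)) : {b // b ∈ π'.parts} :=
  ⟨(π'.exists_mem (Finset.mem_univ x)).choose,
    (π'.exists_mem (Finset.mem_univ x)).choose_spec.1⟩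

lemma mem_blk (x : Fin (n * j)) : x ∈ (blk n j π' x).1 :=
  (π'.exists_mem (Finset.mem_univ x)).choose_spec.2

lemma blk_eq_iff {x : Fin (n * j)} {b : {b // b ∈ π'.parts}} :
    blk n j π' x = b ↔ x ∈ b.1 := by
  constructor
  · rintro rfl; exact mem_blk n j π' x
  · intro hx
    exact Subtype.ext (π'.eq_of_mem_parts (blk n j π' x).2 b.2 (mem_blk n j π' x) hx)

def Pred (σ : Equiv.Perm (Fin (n * j))) : Prop :=
  ∀ x y, q n j x = q n j y → blk n j π' (σ x) = blk n j π' (σ y)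

noncomputable def fσ (hj : 0 < j) (σ : Equiv.Perm (Fin (n * j))) : Fin n → {b // b ∈ π'.parts} :=
  fun k => blk n j π' (σ (sec n j hj k))

lemma blk_comp (hj : 0 < j) {σ : Equiv.Perm (Fin (n * j))} (hσ : Pred n j π' σ)
    (x : Fin (n * j)) : blk n j π' (σ x) = fσ n j π' hj σ (q n j x) :=
  hσ x (sec n j hj (q n j x)) (by rw [q_sec])

/-- The sigma-decomposition over the induced function. -/
noncomputable def predEquiv (hj : 0 < j) :
    {σ : Equiv.Perm (Fin (n * j)) // Pred n j π' σ} ≃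
      Σ f : Fin n → {b // b ∈ π'.parts},
        {σ : Equiv.Perm (Fin (n * j)) // (blk n j π') ∘ σ = f ∘ (q n j)} where
  toFun s := ⟨fσ n j π' hj s.1, s.1, funext fun x => blk_comp n j π' hj s.2 x⟩
  invFun s := ⟨s.2.1, fun x y h => by
    have hx := congrFun s.2.2 x
    have hy := congrFun s.2.2 y
    simp only [Function.comp_apply] at hx hy
    rw [hx, hy, h]⟩
  left_inv s := Subtype.ext rfl
  right_inv := by
    rintro ⟨f, σ, h⟩
    have hf : fσ n j π' hj σ = f := by
      funext k
      have := congrFun h (sec n j hj k)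
      simpa [fσ, q_sec n j hj k, Function.comp] using this
    subst hf
    rfl

/-! ### Step A: pairs correspond to permutations satisfying `Pred` -/

def Cond (p : Finpartition (Finset.univ : Finset (Fin n)) × Equiv.Perm (Fin (n * j))) : Prop :=
  π'.parts = p.1.parts.image fun b => (b.biUnion (group n j)).image p.2

lemma image_eq (hj : 0 < j) (σ : Equiv.Perm (Fin (n * j))) (c : Finset (Fin n)) :
    (c.biUnion (group n j)).image σ =
      (Finset.univ.filter fun x => q n j x ∈ c).image σ := by
  congr 1
  ext x
  rw [mem_biUnion_group_iff n j hj]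
  simp

lemma biUnion_image_injective (hj : 0 < j) (σ : Equiv.Perm (Fin (n * j)))
    {c c' : Finset (Fin n)}
    (h : (c.biUnion (group n j)).image σ = (c'.biUnion (group n j)).image σ) : c = c' := by
  have h2 : c.biUnion (group n j) = c'.biUnion (group n j) :=
    Finset.image_injective σ.injective h
  ext k
  have hk := Finset.ext_iff.1 h2 (sec n j hj k)
  rw [mem_biUnion_group_iff n j hj, mem_biUnion_group_iff n j hj, q_sec] at hk
  exact hk

lemma pred_of_cond (hj : 0 < j) (p) (hp : Cond n j π' p) : Pred n j π' p.2 := by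
  intro x y hxy
  obtain ⟨c, hc, hkc⟩ := p.1.exists_mem (Finset.mem_univ (q n j x))
  have hFc : (c.biUnion (group n j)).image p.2 ∈ π'.parts := by
    rw [hp]; exact Finset.mem_image_of_mem _ hc
  have hx : p.2 x ∈ (c.biUnion (group n j)).image p.2 :=
    Finset.mem_image_of_mem _ ((mem_biUnion_group_iff n j hj c x).2 hkc)
  have hy : p.2 y ∈ (c.biUnion (group n j)).image p.2 :=
    Finset.mem_image_of_mem _ ((mem_biUnion_group_iff n j hj c y).2 (hxy ▸ hkc))
  rw [(blk_eq_iff n j π' (b := ⟨_, hFc⟩)).2 hx, (blk_eq_iff n j π' (b := ⟨_, hFc⟩)).2 hy]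

noncomputable def pullback (hj : 0 < j) (σ : Equiv.Perm (Fin (n * j))) (hσ : Pred n j π' σ) :
    Finpartition (Finset.univ : Finset (Fin n)) where
  parts := π'.parts.attach.image fun b => Finset.univ.filter fun k => fσ n j π' hj σ k = b
  supIndep := by
    rw [Finset.supIndep_iff_pairwiseDisjoint]
    rintro s hs t ht hst
    simp only [Finset.coe_image, Set.mem_image, Finset.mem_coe, Finset.mem_attach] at hs ht
    obtain ⟨b, -, rfl⟩ := hs
    obtain ⟨b', -, rfl⟩ := ht
    have hbb : b ≠ b' := fun h => hst (by rw [h])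
    rw [Function.onFun, Finset.disjoint_left]
    intro k hk hk'
    simp only [id, Finset.mem_filter] at hk hk'
    exact hbb (hk.2 ▸ hk'.2 ▸ rfl)
  sup_parts := by
    ext k
    simp only [Finset.mem_sup, Finset.mem_univ, iff_true, Finset.mem_image, Finset.mem_attach,
      id, true_and]
    exact ⟨_, ⟨fσ n j π' hj σ k, rfl⟩, Finset.mem_filter.2 ⟨Finset.mem_univ k, rfl⟩⟩
  bot_notMem := by
    simp only [Finset.bot_eq_empty, Finset.mem_image, Finset.mem_attach, true_and, not_exists]
    intro b h
    obtain ⟨z, hz⟩ := π'.nonempty_of_mem_parts b.2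
    have hk : fσ n j π' hj σ (q n j (σ.symm z)) = b := by
      rw [← blk_comp n j π' hj hσ, σ.apply_symm_apply]
      exact (blk_eq_iff n j π').2 hz
    have : q n j (σ.symm z) ∈ (∅ : Finset (Fin n)) := by
      rw [← h]; simp [hk]
    simp at this

lemma F_filter (hj : 0 < j) (σ : Equiv.Perm (Fin (n * j))) (hσ : Pred n j π' σ)
    (b : {b // b ∈ π'.parts}) :
    ((Finset.univ.filter fun k => fσ n j π' hj σ k = b).biUnion (group n j)).image σ = b.1 := by
  rw [image_eq n j hj]
  ext y
  simp only [Finset.mem_image, Finset.mem_filter, Finset.mem_univ, true_and]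
  constructor
  · rintro ⟨x, hx, rfl⟩
    rw [← blk_comp n j π' hj hσ] at hx
    exact (blk_eq_iff n j π').1 hx
  · intro hy
    refine ⟨σ.symm y, ?_, σ.apply_symm_apply y⟩
    rw [← blk_comp n j π' hj hσ, σ.apply_symm_apply]
    exact (blk_eq_iff n j π').2 hy

lemma cond_pullback (hj : 0 < j) (σ : Equiv.Perm (Fin (n * j))) (hσ : Pred n j π' σ) :
    Cond n j π' (pullback n j π' hj σ hσ, σ) := by
  unfold Cond pullback
  rw [Finset.image_image]
  have : ∀ b ∈ π'.parts.attach, ((fun b => (Finset.biUnion b (group n j)).image σ) ∘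
      fun b => Finset.univ.filter fun k => fσ n j π' hj σ k = b) b = b.1 := fun b _ =>
    F_filter n j π' hj σ hσ b
  rw [Finset.image_congr fun b hb => this b hb, Finset.attach_image_val]

lemma parts_eq_of_cond (hj : 0 < j) (p) (hp : Cond n j π' p) :
    p.1.parts = π'.parts.attach.image
      fun b => Finset.univ.filter fun k => fσ n j π' hj p.2 k = b := by
  have hσ := pred_of_cond n j π' hj p hp
  -- for c ∈ p.1.parts, c = filter for ⟨F c, _⟩
  have key : ∀ c ∈ p.1.parts, ∀ (hb : (c.biUnion (group n j)).image p.2 ∈ π'.parts),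
      c = Finset.univ.filter fun k => fσ n j π' hj p.2 k =
        ⟨(c.biUnion (group n j)).image p.2, hb⟩ := by
    intro c hc hb
    ext k
    simp only [Finset.mem_filter, Finset.mem_univ, true_and]
    constructor
    · intro hk
      apply (blk_eq_iff n j π').2
      exact Finset.mem_image_of_mem _ ((mem_biUnion_group_iff n j hj c (sec n j hj k)).2
        (by rw [q_sec]; exact hk))
    · intro hk
      obtain ⟨c', hc', hkc'⟩ := p.1.exists_mem (Finset.mem_univ k)
      have hb' : (c'.biUnion (group n j)).image p.2 ∈ π'.parts := by
        rw [hp]; exact Finset.mem_image_of_mem _ hc'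
      have h1 : fσ n j π' hj p.2 k = ⟨(c'.biUnion (group n j)).image p.2, hb'⟩ := by
        apply (blk_eq_iff n j π').2
        exact Finset.mem_image_of_mem _ ((mem_biUnion_group_iff n j hj c' (sec n j hj k)).2
          (by rw [q_sec]; exact hkc'))
      rw [h1] at hk
      have : (c'.biUnion (group n j)).image ⇑p.2 = (c.biUnion (group n j)).image ⇑p.2 :=
        congrArg Subtype.val hk
      rwa [biUnion_image_injective n j hj p.2 this] at hkc'
  apply Finset.Subset.antisymm
  · intro c hc
    have hb : (c.biUnion (group n j)).image p.2 ∈ π'.parts := by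
      rw [hp]; exact Finset.mem_image_of_mem _ hc
    refine Finset.mem_image.2 ⟨⟨_, hb⟩, Finset.mem_attach _ _, ?_⟩
    exact (key c hc hb).symm
  · intro s hs
    obtain ⟨b, -, rfl⟩ := Finset.mem_image.1 hs
    have hb1 : b.1 ∈ p.1.parts.image fun c => (c.biUnion (group n j)).image p.2 := by
      rw [← hp]; exact b.2
    obtain ⟨c, hc, hcb⟩ := Finset.mem_image.1 hb1
    have hb : (c.biUnion (group n j)).image p.2 ∈ π'.parts := hcb.symm ▸ b.2
    have : b = ⟨(c.biUnion (group n j)).image p.2, hb⟩ := Subtype.ext hcb.symm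
    rw [this, ← key c hc hb]
    exact hc

noncomputable def condEquiv (hj : 0 < j) :
    {p : Finpartition (Finset.univ : Finset (Fin n)) × Equiv.Perm (Fin (n * j)) //
        Cond n j π' p} ≃ {σ : Equiv.Perm (Fin (n * j)) // Pred n j π' σ} where
  toFun p := ⟨p.1.2, pred_of_cond n j π' hj p.1 p.2⟩
  invFun s := ⟨(pullback n j π' hj s.1 s.2, s.1), cond_pullback n j π' hj s.1 s.2⟩
  left_inv p := by
    apply Subtype.ext
    apply Prod.ext
    · apply Finpartition.ext
      rw [parts_eq_of_cond n j π' hj p.1 p.2]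
      rfl
    · rfl
  right_inv s := Subtype.ext rfl

/-! ### Fiber cardinalities -/

def qFiberEquiv (hj : 0 < j) (k : Fin n) : {x : Fin (n * j) // q n j x = k} ≃ Fin j where
  toFun x := ⟨x.1.1 - k.1 * j, by
    have h := (q_eq_iff n j hj x.1 k).1 x.2
    rw [add_mul, one_mul] at h
    exact (tsub_lt_iff_right h.1).2 (by rw [add_comm]; exact h.2)⟩
  invFun i := ⟨⟨k.1 * j + i.1, by
      calc k.1 * j + i.1 < k.1 * j + j := by omega
        _ = (k.1 + 1) * j := by ring
        _ ≤ n * j := Nat.mul_le_mul_right j k.2⟩, by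
    refine (q_eq_iff n j hj _ k).2 ⟨Nat.le_add_right _ _, ?_⟩
    show k.1 * j + i.1 < (k.1 + 1) * j
    have : (k.1 + 1) * j = k.1 * j + j := by ring
    omega⟩
  left_inv x := by
    apply Subtype.ext
    apply Fin.ext
    have h := (q_eq_iff n j hj x.1 k).1 x.2
    exact Nat.add_sub_cancel' h.1
  right_inv i := Fin.ext (by show k.1 * j + i.1 - k.1 * j = i.1; omega)

lemma card_q_fiber (hj : 0 < j) (k : Fin n) :
    Nat.card {x : Fin (n * j) // q n j x = k} = j := by
  rw [Nat.card_congr (qFiberEquiv n j hj k), Nat.card_eq_fintype_card, Fintype.card_fin]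

def compFiberEquiv {B : Type*} (f : Fin n → B) (b : B) :
    {x : Fin (n * j) // f (q n j x) = b} ≃
      Σ k : {k : Fin n // f k = b}, {x : Fin (n * j) // q n j x = k.1} where
  toFun x := ⟨⟨q n j x.1, x.2⟩, ⟨x.1, rfl⟩⟩
  invFun s := ⟨s.2.1, by rw [s.2.2]; exact s.1.2⟩
  left_inv x := rfl
  right_inv := by
    rintro ⟨⟨k, hk⟩, ⟨x, hx⟩⟩
    simp only at hx
    subst hx
    rfl

lemma card_comp_fiber (hj : 0 < j) {B : Type*} (f : Fin n → B) (b : B) :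
    Nat.card {x : Fin (n * j) // f (q n j x) = b} = Nat.card {k : Fin n // f k = b} * j := by
  classical
  rw [Nat.card_congr (compFiberEquiv n j f b), natCard_sigma]
  simp only [card_q_fiber n j hj]
  rw [Finset.sum_const, Nat.card_eq_fintype_card, smul_eq_mul, Finset.card_univ]

lemma card_blk_fiber (b : {b // b ∈ π'.parts}) :
    Nat.card {x : Fin (n * j) // blk n j π' x = b} = b.1.card := by
  rw [Nat.card_congr (Equiv.subtypeEquivRight fun x => blk_eq_iff n j π'),
    Nat.card_eq_fintype_card, Fintype.card_coe]

/-- The sigma decomposition of all permutations of `Fin n` over `f0 ∘ ·`. -/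
def permSigmaEquiv {γ : Type*} [DecidableEq γ] (f0 : Fin n → γ) :
    Equiv.Perm (Fin n) ≃ Σ f : Fin n → γ, {σ : Equiv.Perm (Fin n) // f0 ∘ σ = f} where
  toFun σ := ⟨f0 ∘ σ, σ, rfl⟩
  invFun s := s.2.1
  left_inv σ := rfl
  right_inv := by rintro ⟨f, σ, rfl⟩; rfl

end CardPairsAux

open CardPairsAux

/-- For a `j`-even set partition `π'` of `{1,…,nj}`, the number of pairs `(π,σ)` of a set
partition `π` of `{1,…,n}` and a permutation `σ` of `{1,…,nj}` such that the blocks of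
`π'` are exactly the images under `σ` of the unions of the consecutive groups of size `j`
indexed by the blocks of `π`, equals `n! ∏_{b∈π'} (#b)!/(#b/j)!`. -/
theorem card_pairs_even_partition (n j : ℕ) (hn : 1 ≤ n) (hj : 1 ≤ j)
    (π' : Finpartition (Finset.univ : Finset (Fin (n * j)))) (hπ' : IsEven j π') :
    (Nat.card {p : Finpartition (Finset.univ : Finset (Fin n)) × Equiv.Perm (Fin (n * j)) //
        π'.parts = p.1.parts.image fun b => (b.biUnion (group n j)).image p.2} : ℚ) =
      (Nat.factorial n : ℚ) *
        ∏ b ∈ π'.parts,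
          (Nat.factorial b.card : ℚ) / (Nat.factorial (b.card / j) : ℚ) := by
  classical
  have hj0 : 0 < j := hj
  have hcard : ∀ b : {b // b ∈ π'.parts}, b.1.card = b.1.card / j * j := fun b =>
    (Nat.div_mul_cancel (hπ' b.1 b.2)).symm
  set B := {b // b ∈ π'.parts} with hB
  set m : B → ℕ := fun b => b.1.card / j with hm
  set valid : (Fin n → B) → Prop := fun f => ∀ b, Nat.card {k // f k = b} = m b with hvalid
  set K : ℕ := ∑ f : Fin n → B, if valid f then 1 else 0 with hK
  -- Count 1
  have count1 : Nat.card {p : Finpartition (Finset.univ : Finset (Fin n)) ×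
        Equiv.Perm (Fin (n * j)) //
        π'.parts = p.1.parts.image fun b => (b.biUnion (group n j)).image p.2} =
      K * ∏ b : B, (b.1.card).factorial := by
    have e : {p : Finpartition (Finset.univ : Finset (Fin n)) × Equiv.Perm (Fin (n * j)) //
          π'.parts = p.1.parts.image fun b => (b.biUnion (group n j)).image p.2} ≃
        Σ f : Fin n → B, {σ : Equiv.Perm (Fin (n * j)) //
          (blk n j π') ∘ σ = f ∘ (q n j)} :=
      (condEquiv n j π' hj0).trans (predEquiv n j π' hj0)
    rw [Nat.card_congr e, natCard_sigma, hK, Finset.sum_mul]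
    refine Finset.sum_congr rfl fun f _ => ?_
    rw [natCard_perm_comp (blk n j π') (f ∘ q n j)]
    have step : ∀ b : B,
        (if Nat.card {x // (f ∘ q n j) x = b} = Nat.card {x // blk n j π' x = b}
          then (Nat.card {x // blk n j π' x = b}).factorial else 0) =
        (if Nat.card {k // f k = b} = m b then (b.1.card).factorial else 0) := by
      intro b
      have h1 : Nat.card {x // (f ∘ q n j) x = b} = Nat.card {k // f k = b} * j :=
        card_comp_fiber n j hj0 f b
      have h2 : Nat.card {x // blk n j π' x = b} = b.1.card := card_blk_fiber n j π' b
      rw [h1, h2]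
      refine if_congr ?_ rfl rfl
      rw [hm]
      constructor
      · intro h
        exact Nat.eq_of_mul_eq_mul_right hj0 (h.trans (hcard b))
      · intro h
        rw [h, ← hcard b]
    rw [Finset.prod_congr rfl fun b _ => step b,
      prod_ite_indicator (fun b : B => Nat.card {k // f k = b} = m b)
        (fun b : B => (b.1.card).factorial)]
  -- the sum of m over B is n
  have hsum : ∑ b : B, m b = Fintype.card (Fin n) := by
    have h1 : (∑ b : B, m b) * j = n * j := by
      rw [Finset.sum_mul]
      calc ∑ b : B, m b * j = ∑ b : B, b.1.card :=
            Finset.sum_congr rfl fun b _ => (hcard b).symm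
        _ = ∑ b ∈ π'.parts, b.card := Finset.sum_coe_sort _ _
        _ = (Finset.univ : Finset (Fin (n * j))).card := π'.sum_card_parts
        _ = n * j := by rw [Finset.card_univ, Fintype.card_fin]
    rw [Fintype.card_fin]
    exact Nat.eq_of_mul_eq_mul_right hj0 h1
  obtain ⟨f0, hf0⟩ := exists_fun_fiber m hsum
  -- Count 2
  have count2 : n.factorial = K * ∏ b : B, (m b).factorial := by
    have h0 : n.factorial = Nat.card (Equiv.Perm (Fin n)) := by
      rw [Nat.card_eq_fintype_card, Fintype.card_perm, Fintype.card_fin]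
    rw [h0, Nat.card_congr (permSigmaEquiv n f0), natCard_sigma, hK, Finset.sum_mul]
    refine Finset.sum_congr rfl fun f _ => ?_
    rw [natCard_perm_comp f0 f]
    have step : ∀ b : B,
        (if Nat.card {k // f k = b} = Nat.card {k // f0 k = b}
          then (Nat.card {k // f0 k = b}).factorial else 0) =
        (if Nat.card {k // f k = b} = m b then (m b).factorial else 0) := by
      intro b
      rw [hf0 b]
    rw [Finset.prod_congr rfl fun b _ => step b,
      prod_ite_indicator (fun b : B => Nat.card {k // f k = b} = m b)
        (fun b : B => (m b).factorial)]
  -- combine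
  have main : (Nat.card {p : Finpartition (Finset.univ : Finset (Fin n)) ×
        Equiv.Perm (Fin (n * j)) //
        π'.parts = p.1.parts.image fun b => (b.biUnion (group n j)).image p.2}) *
      ∏ b : B, (m b).factorial = n.factorial * ∏ b : B, (b.1.card).factorial := by
    rw [count1, count2]; ring
  have hrhs : ∏ b ∈ π'.parts,
      ((Nat.factorial b.card : ℚ) / (Nat.factorial (b.card / j) : ℚ)) =
      (∏ b : B, ((b.1.card).factorial : ℚ)) / ∏ b : B, ((m b).factorial : ℚ) := by
    rw [← Finset.prod_div_distrib, ← Finset.prod_coe_sort π'.parts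
      (fun b => ((Nat.factorial b.card : ℚ) / (Nat.factorial (b.card / j) : ℚ)))]
  have hPm : (∏ b : B, ((m b).factorial : ℚ)) ≠ 0 := by
    refine Finset.prod_ne_zero_iff.2 fun b _ => ?_
    exact_mod_cast (m b).factorial_ne_zero
  rw [hrhs, mul_div_assoc', eq_div_iff hPm]
  exact_mod_cast congrArg (Nat.cast : ℕ → ℚ) main
end
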